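/- arXiv:0804.1628 — 2 statements merged into one kernel-verified Lean document; each statement's English description precedes it below -/
import Mathlib

section
/- Let θ* ≥ 1, u* := ln θ*, and for a positive integer n define φ_n(r) := ∫_{θ*}^r (e^{2 min{n, (ln s − u*)⁺}} − 1) ds for r ∈ (0,∞). Then there exist positive constants α_* and C* (independent of n and r; one can take α_* = θ*/6) such that φ_n(r) ≥ α_* e^{3 min{n, (ln r − u*)⁺}} − C* for every r ∈ (0,∞) and every positive integer n. -/
open Real MeasureTheory

lemma f_intble (θ : ℝ) (n : ℕ) (a b : ℝ) (ha : 0 < a) (hb : 0 < b) :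
    IntervalIntegrable
      (fun s => Real.exp (2 * min (n:ℝ) (max (Real.log s - Real.log θ) 0)) - 1)
      volume a b := by
  have h1 : Continuous (fun x : ℝ =>
      Real.exp (2 * min (n:ℝ) (max (x - Real.log θ) 0)) - 1) := by
    exact (Real.continuous_exp.comp (continuous_const.mul
      (continuous_const.min ((continuous_id.sub continuous_const).max
        continuous_const)))).sub continuous_const
  have h2 : ContinuousOn Real.log (Set.uIcc a b) := by
    apply Real.continuousOn_log.mono
    intro x hx
    have hx1 : min a b ≤ x := hx.1
    have : 0 < x := lt_of_lt_of_le (lt_min ha hb) hx1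
    simp [ne_of_gt this]
  exact (h1.comp_continuousOn h2).intervalIntegrable

lemma phi_eq (θ : ℝ) (hθ : 1 ≤ θ) (n : ℕ) (r : ℝ) (hr1 : θ ≤ r)
    (hr2 : r ≤ θ * Real.exp n) :
    (∫ s in θ..r, (Real.exp (2 * min (n:ℝ) (max (Real.log s - Real.log θ) 0)) - 1))
      = (r^3/(3*θ^2) - r) - (θ^3/(3*θ^2) - θ) := by
  have hθ0 : (0:ℝ) < θ := lt_of_lt_of_le one_pos hθ
  have hcongr : Set.EqOn
      (fun s => Real.exp (2 * min (n:ℝ) (max (Real.log s - Real.log θ) 0)) - 1)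
      (fun s => s^2/θ^2 - 1) (Set.uIcc θ r) := by
    intro s hs
    rw [Set.uIcc_of_le hr1] at hs
    have hs1 : θ ≤ s := hs.1
    have hs0 : (0:ℝ) < s := lt_of_lt_of_le hθ0 hs1
    have hlog1 : Real.log θ ≤ Real.log s := Real.log_le_log hθ0 hs1
    have hlog2 : Real.log s ≤ Real.log θ + n := by
      have h := Real.log_le_log hs0 (hs.2.trans hr2)
      rwa [Real.log_mul (ne_of_gt hθ0) (Real.exp_ne_zero _), Real.log_exp] at h
    have hmax : max (Real.log s - Real.log θ) 0 = Real.log s - Real.log θ :=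
      max_eq_left (by linarith)
    have hmin : min (n:ℝ) (Real.log s - Real.log θ) = Real.log s - Real.log θ :=
      min_eq_right (by linarith)
    have hlog3 : 2 * (Real.log s - Real.log θ) = Real.log ((s/θ)^2) := by
      rw [Real.log_pow, Real.log_div (ne_of_gt hs0) (ne_of_gt hθ0)]; push_cast; ring
    simp only [hmax, hmin, hlog3]
    rw [Real.exp_log (by positivity : (0:ℝ) < (s/θ)^2), div_pow]
  rw [intervalIntegral.integral_congr hcongr]
  have hF : ∀ x ∈ Set.uIcc θ r, HasDerivAt (fun s : ℝ => s^3/(3*θ^2) - s)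
      (x^2/θ^2 - 1) x := by
    intro x _
    have h1 : HasDerivAt (fun s : ℝ => s^3/(3*θ^2) - s)
        ((↑3 * x^(3-1))/(3*θ^2) - 1) x :=
      ((hasDerivAt_pow 3 x).div_const _).sub (hasDerivAt_id x)
    convert h1 using 1
    field_simp
  have hint : IntervalIntegrable (fun x : ℝ => x^2/θ^2 - 1) volume θ r :=
    (((continuous_pow 2).div_const _).sub continuous_const).intervalIntegrable _ _
  rw [intervalIntegral.integral_eq_sub_of_hasDerivAt hF hint]



/-- Let `θ* ≥ 1`, `u* = ln θ*`, and for a positive integer `n` let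
`φ_n(r) := ∫_{θ*}^r (e^{2 min{n,(ln s − u*)⁺}} − 1) ds`. Then there are
constants `α_* , C* > 0` such that
`φ_n(r) ≥ α_* e^{3 min{n,(ln r − u*)⁺}} − C*` for all `r > 0` and all `n`. -/
theorem stmt7 (θS uS : ℝ) (hθ : 1 ≤ θS) (huS : uS = Real.log θS) :
    ∃ α > (0:ℝ), ∃ C > (0:ℝ), ∀ n : ℕ, 0 < n → ∀ r : ℝ, 0 < r →
      (∫ s in θS..r, (Real.exp (2 * min (n:ℝ) (max (Real.log s - uS) 0)) - 1))
        ≥ α * Real.exp (3 * min (n:ℝ) (max (Real.log r - uS) 0)) - C := by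
  have hθ0 : (0:ℝ) < θS := lt_of_lt_of_le one_pos hθ
  subst huS
  refine ⟨θS/6, by positivity, 2*θS, by positivity, ?_⟩
  intro n hn r hr
  by_cases h1 : r ≤ θS
  · -- integral is 0
    have hz : (∫ s in θS..r,
        (Real.exp (2 * min (n:ℝ) (max (Real.log s - Real.log θS) 0)) - 1)) = 0 := by
      rw [intervalIntegral.integral_congr (g := fun _ => (0:ℝ)) ?_]
      · simp
      · intro s hs
        rw [Set.uIcc_comm, Set.uIcc_of_le h1] at hs
        have hs0 : 0 < s := lt_of_lt_of_le hr hs.1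
        have hlog : Real.log s ≤ Real.log θS := Real.log_le_log hs0 hs.2
        have hmax : max (Real.log s - Real.log θS) 0 = 0 := max_eq_right (by linarith)
        have hmin : min (n:ℝ) (0:ℝ) = 0 := min_eq_right (by positivity)
        simp [hmax, hmin]
    rw [hz]
    have hlog : Real.log r ≤ Real.log θS := Real.log_le_log hr h1
    have hmax : max (Real.log r - Real.log θS) 0 = 0 := max_eq_right (by linarith)
    have hmin : min (n:ℝ) (0:ℝ) = 0 := min_eq_right (by positivity)
    rw [hmax, hmin]
    simp only [mul_zero, Real.exp_zero, mul_one]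
    linarith
  push_neg at h1
  by_cases h2 : r ≤ θS * Real.exp n
  · rw [phi_eq θS hθ n r h1.le h2]
    have h0 : 0 ≤ Real.log r - Real.log θS := sub_nonneg.2 (Real.log_le_log hθ0 h1.le)
    have hub : Real.log r ≤ Real.log θS + n := by
      have h := Real.log_le_log hr h2
      rwa [Real.log_mul (ne_of_gt hθ0) (Real.exp_ne_zero _), Real.log_exp] at h
    have hm : min (n:ℝ) (max (Real.log r - Real.log θS) 0)
        = Real.log r - Real.log θS := by
      rw [max_eq_left h0, min_eq_right (by linarith)]
    rw [hm]
    have hexp : Real.exp (3 * (Real.log r - Real.log θS)) = r^3/θS^3 := by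
      have hlog3 : 3 * (Real.log r - Real.log θS) = Real.log ((r/θS)^3) := by
        rw [Real.log_pow, Real.log_div (ne_of_gt hr) (ne_of_gt hθ0)]; push_cast; ring
      rw [hlog3, Real.exp_log (by positivity : (0:ℝ) < (r/θS)^3), div_pow]
    rw [hexp]
    have hnum : 0 ≤ r^3 - 6*θS^2*r + 16*θS^3 := by
      nlinarith [sq_nonneg (r - 2*θS), hr.le, hθ0.le, mul_nonneg (sq_nonneg (r - 2*θS)) hθ0.le]
    have heq : (r^3/(3*θS^2) - r) - (θS^3/(3*θS^2) - θS) - (θS/6 * (r^3/θS^3) - 2*θS)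
        = (r^3 - 6*θS^2*r + 16*θS^3)/(6*θS^2) := by
      field_simp
      ring
    have hpos : 0 ≤ (r^3 - 6*θS^2*r + 16*θS^3)/(6*θS^2) := by positivity
    linarith
  · push_neg at h2
    set R := θS * Real.exp n with hR
    have hE : (1:ℝ) ≤ Real.exp n := Real.one_le_exp (by positivity)
    have hRθ : θS ≤ R := le_mul_of_one_le_right hθ0.le hE
    have hR0 : 0 < R := by positivity
    have hm : min (n:ℝ) (max (Real.log r - Real.log θS) 0) = n := by
      have hlb : Real.log θS + n ≤ Real.log r := by
        have h := Real.log_le_log hR0 h2.le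
        rwa [Real.log_mul (ne_of_gt hθ0) (Real.exp_ne_zero _), Real.log_exp] at h
      have hn0 : (0:ℝ) ≤ n := by positivity
      rw [min_eq_left]
      exact le_max_of_le_left (by linarith)
    rw [hm]
    have hsplit :
        (∫ s in θS..r, (Real.exp (2 * min (n:ℝ) (max (Real.log s - Real.log θS) 0)) - 1))
        = (∫ s in θS..R, (Real.exp (2 * min (n:ℝ) (max (Real.log s - Real.log θS) 0)) - 1))
        + (∫ s in R..r, (Real.exp (2 * min (n:ℝ) (max (Real.log s - Real.log θS) 0)) - 1)) :=
      (intervalIntegral.integral_add_adjacent_intervals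
        (f_intble θS n θS R hθ0 hR0) (f_intble θS n R r hR0 hr)).symm
    have h2nd : 0 ≤ ∫ s in R..r,
        (Real.exp (2 * min (n:ℝ) (max (Real.log s - Real.log θS) 0)) - 1) := by
      apply intervalIntegral.integral_nonneg h2.le
      intro x _
      have : (0:ℝ) ≤ 2 * min (n:ℝ) (max (Real.log x - Real.log θS) 0) := by
        have : (0:ℝ) ≤ min (n:ℝ) (max (Real.log x - Real.log θS) 0) :=
          le_min (by positivity) (le_max_right _ _)
        linarith
      have := Real.one_le_exp this
      linarith
    rw [hsplit, phi_eq θS hθ n R hRθ (le_refl _)]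
    have hexp3 : Real.exp (3 * (n:ℝ)) = (Real.exp n)^3 := by
      rw [show (3:ℝ) * (n:ℝ) = ((3:ℕ):ℝ) * (n:ℝ) by norm_num, Real.exp_nat_mul]
    rw [hexp3]
    set E := Real.exp n with hEdef
    have heq : (R^3/(3*θS^2) - R) - (θS^3/(3*θS^2) - θS) - (θS/6 * E^3 - 2*θS)
        = θS*(E^3 - 6*E + 16)/6 := by
      rw [hR]
      field_simp
      ring
    have hnum : 0 ≤ E^3 - 6*E + 16 := by
      nlinarith [sq_nonneg (E - 2), mul_nonneg (sq_nonneg (E - 2)) (by linarith : (0:ℝ) ≤ E + 4)]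
    have hpos : 0 ≤ θS*(E^3 - 6*E + 16)/6 := by positivity
    linarith
end

section
/- Let θ* ≥ 1, u* := ln θ*, p ∈ [1,∞), and for a positive integer n define ψ_n(r) := ∫_{θ*}^r (min{n, (ln s − u*)⁺})^{2p−1} ds for r ∈ (0,∞). Then ψ_n(r) ≥ (1/(2p)) (min{n, (ln r − u*)⁺})^{2p} for every r ∈ (0,∞). -/
open Real intervalIntegral

private lemma stmt8_cont (uS p : ℝ) (n : ℕ) (hp : 1 ≤ p) :
    ContinuousOn (fun s : ℝ => (min (n:ℝ) (max (Real.log s - uS) 0)) ^ (2 * p - 1))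
      {s : ℝ | s ≠ 0} := by
  apply ContinuousOn.rpow_const
  · exact continuousOn_const.inf
      ((Real.continuousOn_log.sub continuousOn_const).sup continuousOn_const)
  · intro x _; right; linarith

private lemma stmt8_key (θS uS p : ℝ) (hθ : 1 ≤ θS) (huS : uS = Real.log θS) (hp : 1 ≤ p)
    (n : ℕ) (r : ℝ) (hr1 : θS ≤ r) (hr2 : Real.log r - uS ≤ n) :
    (∫ s in θS..r, (min (n:ℝ) (max (Real.log s - uS) 0)) ^ (2 * p - 1))
      ≥ (1 / (2 * p)) * (Real.log r - uS) ^ (2 * p) := by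
  have hθ0 : (0:ℝ) < θS := lt_of_lt_of_le one_pos hθ
  have h2p : (0:ℝ) < 2 * p := by linarith
  set f : ℝ → ℝ := fun s => (min (n:ℝ) (max (Real.log s - uS) 0)) ^ (2 * p - 1) with hf
  set g : ℝ → ℝ := fun s => (Real.log s - uS) ^ (2 * p - 1) * s⁻¹ with hg
  have hsub : Set.uIcc θS r ⊆ {s : ℝ | s ≠ 0} := by
    rw [Set.uIcc_of_le hr1]
    intro x hx
    exact ne_of_gt (lt_of_lt_of_le hθ0 hx.1)
  -- FTC for g
  have hderiv : ∀ x ∈ Set.uIcc θS r,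
      HasDerivAt (fun s => (1 / (2 * p)) * (Real.log s - uS) ^ (2 * p)) (g x) x := by
    intro x hx
    rw [Set.uIcc_of_le hr1] at hx
    have hx0 : (0:ℝ) < x := lt_of_lt_of_le hθ0 hx.1
    have hd1 : HasDerivAt (fun s : ℝ => Real.log s - uS) x⁻¹ x :=
      (Real.hasDerivAt_log hx0.ne').sub_const uS
    have hd2 := (Real.hasDerivAt_rpow_const (x := Real.log x - uS) (p := 2 * p)
      (Or.inr (by linarith))).comp x hd1
    have := hd2.const_mul (1 / (2 * p))
    have e : g x = 1 / (2 * p) * (2 * p * (Real.log x - uS) ^ (2 * p - 1) * x⁻¹) := by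
      simp only [hg]
      field_simp
    rw [e]; exact this
  have hgint : IntervalIntegrable g MeasureTheory.volume θS r := by
    apply ContinuousOn.intervalIntegrable
    apply ContinuousOn.mul
    · apply ContinuousOn.rpow_const
      · exact ((Real.continuousOn_log.mono hsub).sub continuousOn_const)
      · intro x _; right; linarith
    · exact continuousOn_inv₀.mono hsub
  have hfint : IntervalIntegrable f MeasureTheory.volume θS r :=
    ((stmt8_cont uS p n hp).mono hsub).intervalIntegrable
  have hgle : ∀ x ∈ Set.Icc θS r, g x ≤ f x := by
    intro x hx
    have hx0 : (0:ℝ) < x := lt_of_lt_of_le hθ0 hx.1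
    have hlog0 : 0 ≤ Real.log x - uS := by
      rw [huS]; have := Real.log_le_log hθ0 hx.1; linarith
    have hlogn : Real.log x - uS ≤ n := by
      have := Real.log_le_log hx0 hx.2; linarith
    have hfx : f x = (Real.log x - uS) ^ (2 * p - 1) := by
      simp only [hf]
      rw [max_eq_left hlog0, min_eq_right hlogn]
    rw [hfx, hg]
    have h1 : x⁻¹ ≤ 1 := inv_le_one_of_one_le₀ (le_trans hθ hx.1)
    have h2 : 0 ≤ (Real.log x - uS) ^ (2 * p - 1) := Real.rpow_nonneg hlog0 _
    calc (Real.log x - uS) ^ (2 * p - 1) * x⁻¹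
        ≤ (Real.log x - uS) ^ (2 * p - 1) * 1 := by
          apply mul_le_mul_of_nonneg_left h1 h2
      _ = (Real.log x - uS) ^ (2 * p - 1) := mul_one _
  have hgeq : (∫ s in θS..r, g s)
      = (1 / (2 * p)) * (Real.log r - uS) ^ (2 * p) := by
    rw [intervalIntegral.integral_eq_sub_of_hasDerivAt hderiv hgint]
    have : Real.log θS - uS = 0 := by rw [huS]; ring
    rw [this, Real.zero_rpow (ne_of_gt h2p)]
    ring
  calc (∫ s in θS..r, f s) ≥ (∫ s in θS..r, g s) :=
        intervalIntegral.integral_mono_on hr1 hgint hfint hgle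
    _ = (1 / (2 * p)) * (Real.log r - uS) ^ (2 * p) := hgeq

/-- Let `θ* ≥ 1`, `u* = ln θ*`, `p ∈ [1,∞)`, and for a positive integer `n` let
`ψ_n(r) := ∫_{θ*}^r (min{n,(ln s − u*)⁺})^{2p−1} ds`. Then
`ψ_n(r) ≥ (1/(2p)) (min{n,(ln r − u*)⁺})^{2p}` for every `r > 0`. -/
theorem stmt8 (θS uS p : ℝ) (hθ : 1 ≤ θS) (huS : uS = Real.log θS) (hp : 1 ≤ p) :
    ∀ n : ℕ, 0 < n → ∀ r : ℝ, 0 < r →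
      (∫ s in θS..r, (min (n:ℝ) (max (Real.log s - uS) 0)) ^ (2 * p - 1))
        ≥ (1 / (2 * p)) * (min (n:ℝ) (max (Real.log r - uS) 0)) ^ (2 * p) := by
  intro n hn r hr
  have hθ0 : (0:ℝ) < θS := lt_of_lt_of_le one_pos hθ
  have h2p : (0:ℝ) < 2 * p := by linarith
  rcases le_or_gt r θS with hle | hlt
  · -- r ≤ θS : both sides are 0
    have hRHS : min (n:ℝ) (max (Real.log r - uS) 0) = 0 := by
      have : Real.log r ≤ uS := by rw [huS]; exact Real.log_le_log hr hle
      rw [max_eq_right (by linarith), min_eq_right (by positivity)]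
    have hLHS : (∫ s in θS..r, (min (n:ℝ) (max (Real.log s - uS) 0)) ^ (2 * p - 1)) = 0 := by
      rw [intervalIntegral.integral_congr (g := fun _ => (0:ℝ))]
      · simp
      · intro s hs
        rw [Set.uIcc_of_ge hle] at hs
        have hs0 : 0 < s := lt_of_lt_of_le hr hs.1
        have : Real.log s ≤ uS := by rw [huS]; exact Real.log_le_log hs0 hs.2
        simp only
        rw [max_eq_right (by linarith), min_eq_right (by positivity),
          Real.zero_rpow (by linarith)]
    rw [hLHS, hRHS, Real.zero_rpow (ne_of_gt h2p), mul_zero]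
  · rcases le_or_gt (Real.log r - uS) n with hrn | hrn
    · -- θS < r ≤ θS e^n
      have hkey := stmt8_key θS uS p hθ huS hp n r hlt.le hrn
      have hlog0 : 0 ≤ Real.log r - uS := by
        rw [huS]; have := Real.log_le_log hθ0 hlt.le; linarith
      rw [max_eq_left hlog0, min_eq_right hrn]
      exact hkey
    · -- r > θS e^n
      set c : ℝ := θS * Real.exp n with hc
      have hc1 : θS ≤ c := by
        rw [hc]
        nlinarith [Real.one_le_exp (by positivity : (0:ℝ) ≤ (n:ℝ))]
      have hlogc : Real.log c - uS = n := by
        rw [hc, Real.log_mul (ne_of_gt hθ0) (ne_of_gt (Real.exp_pos _)),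
          Real.log_exp, huS]; ring
      have hcr : c ≤ r := by
        have h1 : Real.log c ≤ Real.log r := by linarith
        have hc0 : 0 < c := lt_of_lt_of_le hθ0 hc1
        exact (Real.log_le_log_iff hc0 hr).mp h1
      set f : ℝ → ℝ := fun s => (min (n:ℝ) (max (Real.log s - uS) 0)) ^ (2 * p - 1) with hf
      have hint1 : IntervalIntegrable f MeasureTheory.volume θS c := by
        apply ((stmt8_cont uS p n hp).mono _).intervalIntegrable
        rw [Set.uIcc_of_le hc1]
        intro x hx; exact ne_of_gt (lt_of_lt_of_le hθ0 hx.1)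
      have hint2 : IntervalIntegrable f MeasureTheory.volume c r := by
        apply ((stmt8_cont uS p n hp).mono _).intervalIntegrable
        rw [Set.uIcc_of_le hcr]
        intro x hx; exact ne_of_gt (lt_of_lt_of_le (lt_of_lt_of_le hθ0 hc1) hx.1)
      have hsplit : (∫ s in θS..r, f s) = (∫ s in θS..c, f s) + (∫ s in c..r, f s) :=
        (intervalIntegral.integral_add_adjacent_intervals hint1 hint2).symm
      have h2nd : 0 ≤ (∫ s in c..r, f s) := by
        apply intervalIntegral.integral_nonneg hcr
        intro u _
        apply Real.rpow_nonneg
        exact le_min (by positivity) (le_max_right _ _)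
      have h1st := stmt8_key θS uS p hθ huS hp n c hc1 (le_of_eq hlogc)
      rw [hlogc] at h1st
      have hRHS : min (n:ℝ) (max (Real.log r - uS) 0) = n := by
        have hn0 : (0:ℝ) ≤ n := by positivity
        rw [max_eq_left (by linarith), min_eq_left (by linarith)]
      rw [hRHS, hsplit]
      calc (∫ s in θS..c, f s) + (∫ s in c..r, f s)
          ≥ (1 / (2 * p)) * (n:ℝ) ^ (2 * p) + 0 := add_le_add h1st h2nd
        _ = (1 / (2 * p)) * (n:ℝ) ^ (2 * p) := add_zero _
end
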